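/- arXiv:2207.02345 — 6 statements merged into one kernel-verified Lean document; each statement's English description precedes it below -/
import Mathlib

section
/- Let $(\Omega, \mathcal{F})$ be a measurable space, $J$ a nonempty index set, and $\mathcal{H}_j \subseteq \mathcal{F}$ sub-sigma-algebras. A function $X : \Omega \to [0,1]$ is $\sigma(\bigcup_{j\in J}\mathcal{H}_j)$-measurable if and only if there exist a product-measurable function $h : [0,1]^J \to [0,1]$ and $\mathcal{H}_j$-measurable functions $Y_j : \Omega \to [0,1]$ for each $j \in J$ such that $X(\omega) = h((Y_j(\omega))_{j\in J})$ for all $\omega \in \Omega$. -/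
open MeasureTheory Set MeasurableSpace

lemma notCountable_unitInterval : ¬ Countable unitInterval := fun h => by
  have h1 : (Set.Icc (0:ℝ) 1).Countable := Set.countable_coe_iff.mp h
  have h2 : Cardinal.mk (Set.Icc (0:ℝ) 1) = Cardinal.continuum :=
    Cardinal.mk_Icc_real zero_lt_one
  have h3 := h1.le_aleph0
  rw [h2] at h3
  exact absurd h3 Cardinal.aleph0_lt_continuum.not_ge

/-- Any set measurable w.r.t. a supremum of σ-algebras is measurable w.r.t. the σ-algebra
generated by countably many sets, each measurable in one of the σ-algebras. -/
lemma exists_countable_gen {Ω J : Type*} (H : J → MeasurableSpace Ω) {s : Set Ω}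
    (hs : MeasurableSet[⨆ j, H j] s) :
    ∃ C : Set (Set Ω), C.Countable ∧ (∀ A ∈ C, ∃ j, MeasurableSet[H j] A) ∧
      MeasurableSet[generateFrom C] s := by
  rw [measurableSet_iSup] at hs
  induction hs with
  | basic u hu =>
      exact ⟨{u}, countable_singleton u, by simpa using hu,
        measurableSet_generateFrom (mem_singleton u)⟩
  | empty => exact ⟨∅, countable_empty, by simp, @MeasurableSet.empty _ (generateFrom ∅)⟩
  | compl u _ ih =>
      obtain ⟨C, hC, hCH, hCu⟩ := ih
      exact ⟨C, hC, hCH, hCu.compl⟩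
  | iUnion f _ ih =>
      choose C hC hCH hCf using ih
      refine ⟨⋃ n, C n, countable_iUnion hC, ?_, ?_⟩
      · rintro A hA
        obtain ⟨n, hn⟩ := mem_iUnion.mp hA
        exact hCH n A hn
      · exact MeasurableSet.iUnion fun n =>
          (generateFrom_mono (subset_iUnion C n)) _ (hCf n)

/-- X : Ω → [0,1] is σ(⋃ⱼ ℋⱼ)-measurable iff X = h((Yⱼ)ⱼ) for a
product-measurable h and ℋⱼ-measurable Yⱼ. -/
theorem stmt_2 {Ω : Type*} [F : MeasurableSpace Ω] {J : Type*} [Nonempty J]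
    (H : J → MeasurableSpace Ω) (hH : ∀ j, H j ≤ F) (X : Ω → unitInterval) :
    Measurable[⨆ j, H j] X ↔
      ∃ (h : (J → unitInterval) → unitInterval) (Y : J → Ω → unitInterval),
        Measurable h ∧ (∀ j, Measurable[H j] (Y j)) ∧
        ∀ ω, X ω = h fun j => Y j ω := by
  classical
  constructor
  · intro hX
    -- countably generated pullback σ-algebra
    have hle : MeasurableSpace.comap X inferInstance ≤ ⨆ j, H j :=
      measurable_iff_comap_le.mp hX
    obtain ⟨b, hbc, hbeq⟩ :=
      (MeasurableSpace.CountablyGenerated.comap X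
        (β := unitInterval) (α := Ω)).isCountablyGenerated
    have hSmem : ∀ S ∈ b, MeasurableSet[⨆ j, H j] S := fun S hS =>
      hle _ (by rw [hbeq]; exact measurableSet_generateFrom hS)
    choose C hCc hCH hCS using fun S : b => exists_countable_gen H (hSmem S S.2)
    haveI : Countable b := hbc.to_subtype
    set C0 : Set (Set Ω) := insert ∅ (⋃ S : b, C S) with hC0def
    have hC0c : C0.Countable := (countable_iUnion hCc).insert _
    have hC0H : ∀ A ∈ C0, ∃ j, MeasurableSet[H j] A := by
      rintro A (rfl | hA)
      · exact ⟨Classical.arbitrary J, @MeasurableSet.empty _ (H _)⟩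
      · obtain ⟨S, hS⟩ := mem_iUnion.mp hA
        exact hCH S A hS
    have hleC0 : MeasurableSpace.comap X inferInstance ≤ generateFrom C0 := by
      rw [hbeq]
      refine generateFrom_le fun S hS => ?_
      exact (generateFrom_mono (subset_trans (subset_iUnion C ⟨S, hS⟩)
        (subset_insert _ _))) _ (hCS ⟨S, hS⟩)
    -- enumerate the countable generating family
    obtain ⟨A, hA⟩ := hC0c.exists_eq_range ⟨∅, mem_insert _ _⟩
    have hAmem : ∀ n, A n ∈ C0 := fun n => hA ▸ mem_range_self n
    choose js hjs using fun n => hC0H (A n) (hAmem n)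
    -- the indicator process
    set G : Ω → ℕ → Bool := fun ω n => if ω ∈ A n then true else false with hGdef
    have hGA : ∀ n, G ⁻¹' ((fun y : ℕ → Bool => y n) ⁻¹' {true}) = A n := by
      intro n; ext ω; simp [hGdef]
    have hle2 : MeasurableSpace.comap X inferInstance ≤
        MeasurableSpace.comap G MeasurableSpace.pi := by
      refine hleC0.trans (generateFrom_le fun s hs => ?_)
      rw [hA] at hs
      obtain ⟨n, rfl⟩ := hs
      exact MeasurableSpace.measurableSet_comap.mpr
        ⟨(fun y : ℕ → Bool => y n) ⁻¹' {true},
          (measurable_pi_apply n) (measurableSet_singleton true), hGA n⟩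
    have hXG : Measurable[MeasurableSpace.comap G MeasurableSpace.pi] X :=
      measurable_iff_comap_le.mpr hle2
    -- Doob–Dynkin: factor X through G
    have hXr : Measurable[MeasurableSpace.comap G MeasurableSpace.pi]
        fun ω => (X ω : ℝ) := measurable_subtype_coe.comp hXG
    have hSq : ∀ q : ℚ, MeasurableSet[MeasurableSpace.comap G MeasurableSpace.pi]
        ((fun ω => (X ω : ℝ)) ⁻¹' Iic (q : ℝ)) := fun q => hXr measurableSet_Iic
    choose B hB hBeq using fun q : ℚ => MeasurableSpace.measurableSet_comap.mp (hSq q)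
    set g : (ℕ → Bool) → ℝ :=
      fun y => ⨅ q : ℚ, if y ∈ B q then max 0 (min (q : ℝ) 1) else 1 with hgdef
    have hg : Measurable g :=
      Measurable.iInf fun q => Measurable.ite (hB q) measurable_const measurable_const
    have hgG : ∀ ω, g (G ω) = (X ω : ℝ) := by
      intro ω
      have hmem : ∀ q : ℚ, G ω ∈ B q ↔ (X ω : ℝ) ≤ q := by
        intro q
        constructor
        · intro hq
          have : ω ∈ G ⁻¹' B q := hq
          rw [hBeq q] at this
          exact this
        · intro hq
          have : ω ∈ G ⁻¹' B q := by rw [hBeq q]; exact hq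
          exact this
      have h0 : (0 : ℝ) ≤ X ω := (X ω).2.1
      have h1 : (X ω : ℝ) ≤ 1 := (X ω).2.2
      rw [hgdef]
      refine le_antisymm ?_ ?_
      · refine le_of_forall_pos_le_add fun ε hε => ?_
        obtain ⟨q, hq1, hq2⟩ := exists_rat_btwn (lt_add_of_pos_right (X ω : ℝ) hε)
        have hq0 : (0 : ℝ) ≤ q := le_of_lt (lt_of_le_of_lt h0 hq1)
        have : (⨅ q : ℚ, if G ω ∈ B q then max 0 (min (q : ℝ) 1) else 1) ≤
            if G ω ∈ B q then max 0 (min (q : ℝ) 1) else 1 := by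
          refine ciInf_le ⟨0, ?_⟩ q
          rintro x ⟨q', rfl⟩
          dsimp only
          split
          · exact le_max_left _ _
          · norm_num
        refine this.trans ?_
        rw [if_pos ((hmem q).mpr hq1.le)]
        exact (max_le hq0 ((min_le_left _ _))).trans hq2.le
      · refine le_ciInf fun q => ?_
        split
        next hq =>
          have hXq := (hmem q).mp hq
          exact le_max_of_le_right (le_min hXq h1)
        next => exact h1
    -- the Borel isomorphism encoding
    let e : unitInterval ≃ᵐ (ℕ → Bool) :=
      PolishSpace.measurableEquivNatBoolOfNotCountable notCountable_unitInterval
    set Yb : J → Ω → ℕ → Bool := fun j ω n => if js n = j then G ω n else false with hYbdef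
    refine ⟨fun y => Set.projIcc (0 : ℝ) 1 zero_le_one (g fun n => e (y (js n)) n),
      fun j ω => e.symm (Yb j ω), ?_, ?_, ?_⟩
    · refine (continuous_projIcc.measurable).comp (hg.comp ?_)
      exact measurable_pi_lambda _ fun n =>
        (measurable_pi_apply n).comp (e.measurable.comp (measurable_pi_apply (js n)))
    · intro j
      letI : MeasurableSpace Ω := H j
      refine e.symm.measurable.comp (measurable_pi_lambda _ fun n => ?_)
      by_cases hjn : js n = j
      · simp only [hYbdef, if_pos hjn, hGdef]
        have hAn : MeasurableSet[H j] (A n) := hjn ▸ hjs n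
        letI : MeasurableSpace Ω := H j
        exact Measurable.ite hAn measurable_const measurable_const
      · simp only [hYbdef, if_neg hjn]
        exact measurable_const
    · intro ω
      have key : (fun n => e ((e.symm (Yb (js n) ω))) n) = G ω := by
        funext n
        rw [e.apply_symm_apply]
        simp [hYbdef]
      simp only [key, hgG ω]
      exact (Set.projIcc_of_mem zero_le_one (X ω).2).symm
  · rintro ⟨h, Y, hh, hY, hXY⟩
    have hmeas : Measurable[⨆ j, H j] fun ω => h fun j => Y j ω := by
      letI : MeasurableSpace Ω := ⨆ j, H j
      exact hh.comp (measurable_pi_lambda _ fun j => (hY j).mono (le_iSup H j) le_rfl)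
    have : X = fun ω => h fun j => Y j ω := funext hXY
    rw [this]
    exact hmeas
end

section
/- Let $(\Omega, \mathcal{F})$ be a measurable space, $\mathcal{H}_1, \mathcal{H}_2 \subseteq \mathcal{F}$ two sub-sigma-algebras, and $X : \Omega \to \mathbb{R}$ a function. Then $X$ is $\sigma(\mathcal{H}_1 \cup \mathcal{H}_2)$-measurable if and only if there exist a Borel measurable function $h : [0,1]^2 \to \mathbb{R}$ and functions $Y_1, Y_2 : \Omega \to [0,1]$ with $Y_i$ being $\mathcal{H}_i$-measurable for $i \in \{1,2\}$, such that $X = h(Y_1, Y_2)$. -/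
/-!
A real function is measurable for `ℋ₁ ⊔ ℋ₂` iff it is measurable for the σ-algebra generated by
`(Y₁, Y₂)` for some `ℋᵢ`-measurable `Yᵢ` into `[0,1]`, and the latter is Doob–Dynkin factorization
through `(Y₁, Y₂)`. To find the `Yᵢ`: the pullback of the Borel sets under `X` is countably
generated, and each of its generators needs only countably many sets of `ℋ₁ ∪ ℋ₂`, so it lies in
`m₁ ⊔ m₂` with `mᵢ ≤ ℋᵢ` countably generated. A countably generated σ-algebra is the pullback
under its indicator sequence `Ω → ℕ → Bool`, and the Borel isomorphism `(ℕ → Bool) ≃ᵐ [0,1]`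
turns this into a pullback under a map to `[0,1]`.
-/

open MeasureTheory MeasurableSpace Set

theorem not_countable_nat_bool : ¬Countable (ℕ → Bool) := by
  rw [← Cardinal.mk_le_aleph0_iff, not_le]
  simpa using Cardinal.aleph0_lt_continuum

theorem not_countable_unitInterval : ¬Countable unitInterval := by
  rw [Set.countable_coe_iff, Cardinal.Real.Icc_countable_iff]
  norm_num

namespace MeasurableSpace

variable {Ω : Type*}

theorem exists_countable_subset_measurableSet_generateFrom {U : Set (Set Ω)} {s : Set Ω}
    (hs : MeasurableSet[generateFrom U] s) :
    ∃ T ⊆ U, T.Countable ∧ MeasurableSet[generateFrom T] s := by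
  induction hs with
  | basic t ht => exact ⟨{t}, singleton_subset_iff.2 ht, countable_singleton t,
      measurableSet_generateFrom rfl⟩
  | empty => exact ⟨∅, empty_subset U, countable_empty, @MeasurableSet.empty _ (generateFrom ∅)⟩
  | compl t _ ih =>
    obtain ⟨T, hTU, hTc, ht⟩ := ih
    exact ⟨T, hTU, hTc, ht.compl⟩
  | iUnion f _ ih =>
    choose T hTU hTc hf using ih
    exact ⟨⋃ n, T n, iUnion_subset hTU, countable_iUnion hTc,
      .iUnion fun n => generateFrom_mono (subset_iUnion T n) _ (hf n)⟩

theorem exists_countable_subset_le_generateFrom {m : MeasurableSpace Ω} [@CountablyGenerated Ω m]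
    {U : Set (Set Ω)} (hm : m ≤ generateFrom U) :
    ∃ T ⊆ U, T.Countable ∧ m ≤ generateFrom T := by
  obtain ⟨b, hb, rfl⟩ := CountablyGenerated.isCountablyGenerated (α := Ω)
  choose! T hTU hTc hT using fun s (hs : s ∈ b) =>
    exists_countable_subset_measurableSet_generateFrom (hm s (measurableSet_generateFrom hs))
  exact ⟨⋃ s ∈ b, T s, iUnion₂_subset hTU, hb.biUnion hTc,
    generateFrom_le fun s hs => generateFrom_mono (subset_biUnion_of_mem hs) _ (hT s hs)⟩

theorem exists_countablyGenerated_le_sup {m H₁ H₂ : MeasurableSpace Ω} [@CountablyGenerated Ω m]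
    (hm : m ≤ H₁ ⊔ H₂) :
    ∃ m₁ m₂ : MeasurableSpace Ω, @CountablyGenerated Ω m₁ ∧ @CountablyGenerated Ω m₂ ∧
      m₁ ≤ H₁ ∧ m₂ ≤ H₂ ∧ m ≤ m₁ ⊔ m₂ := by
  set A := {s | MeasurableSet[H₁] s}
  set B := {s | MeasurableSet[H₂] s}
  have hsup : H₁ ⊔ H₂ = generateFrom (A ∪ B) := by
    rw [← generateFrom_sup_generateFrom, @generateFrom_measurableSet Ω H₁,
      @generateFrom_measurableSet Ω H₂]
  obtain ⟨T, hTAB, hTc, hmT⟩ := exists_countable_subset_le_generateFrom (hsup ▸ hm)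
  refine ⟨generateFrom (T ∩ A), generateFrom (T ∩ B),
    @CountablyGenerated.mk _ (generateFrom _) ⟨_, hTc.mono inter_subset_left, rfl⟩,
    @CountablyGenerated.mk _ (generateFrom _) ⟨_, hTc.mono inter_subset_left, rfl⟩,
    generateFrom_le fun s hs => hs.2, generateFrom_le fun s hs => hs.2, ?_⟩
  rwa [generateFrom_sup_generateFrom, ← inter_union_distrib_left,
    inter_eq_self_of_subset_left hTAB]

theorem comap_mapNatBool [m : MeasurableSpace Ω] [CountablyGenerated Ω] :
    MeasurableSpace.pi.comap (mapNatBool Ω) = m := by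
  refine le_antisymm (measurable_mapNatBool Ω).comap_le ?_
  conv_lhs => rw [← generateFrom_natGeneratingSequence Ω]
  refine generateFrom_le ?_
  rintro - ⟨n, rfl⟩
  refine ⟨{y | y n = true}, measurableSet_eq_fun (measurable_pi_apply n) measurable_const, ?_⟩
  ext ω
  simp [mapNatBool]

theorem exists_comap_eq_of_countablyGenerated {β : Type*} [MeasurableSpace β]
    [StandardBorelSpace β] (hβ : ¬Countable β) (m : MeasurableSpace Ω)
    [@CountablyGenerated Ω m] :
    ∃ Y : Ω → β, ‹MeasurableSpace β›.comap Y = m := by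
  let e := PolishSpace.measurableEquivOfNotCountable not_countable_nat_bool hβ
  refine ⟨e ∘ @mapNatBool Ω m _, ?_⟩
  rw [← comap_comp, e.measurableEmbedding.comap_eq, @comap_mapNatBool Ω m]

end MeasurableSpace

theorem stmt_3_general {Ω : Type*} (H1 H2 : MeasurableSpace Ω) (X : Ω → ℝ) :
    Measurable[H1 ⊔ H2] X ↔
      ∃ (h : unitInterval × unitInterval → ℝ) (Y1 Y2 : Ω → unitInterval),
        Measurable h ∧ Measurable[H1] Y1 ∧ Measurable[H2] Y2 ∧
        ∀ ω, X ω = h (Y1 ω, Y2 ω) := by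
  constructor
  · intro hX
    have := CountablyGenerated.comap (β := ℝ) X
    obtain ⟨m₁, m₂, _, _, hm₁, hm₂, hm⟩ := exists_countablyGenerated_le_sup hX.comap_le
    obtain ⟨Y1, rfl⟩ := exists_comap_eq_of_countablyGenerated not_countable_unitInterval m₁
    obtain ⟨Y2, rfl⟩ := exists_comap_eq_of_countablyGenerated not_countable_unitInterval m₂
    have hXY : Measurable[MeasurableSpace.comap (fun ω => (Y1 ω, Y2 ω)) inferInstance] X :=
      measurable_iff_comap_le.2 <| (comap_prodMk Y1 Y2).symm ▸ hm
    obtain ⟨h, hh, rfl⟩ := hXY.exists_eq_measurable_comp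
    exact ⟨h, Y1, Y2, hh, measurable_iff_comap_le.2 hm₁, measurable_iff_comap_le.2 hm₂,
      fun _ => rfl⟩
  · rintro ⟨h, Y1, Y2, hh, hY1, hY2, hX⟩
    rw [funext hX]
    exact hh.comp ((hY1.mono le_sup_left le_rfl).prodMk (hY2.mono le_sup_right le_rfl))

/-- X : Ω → ℝ is σ(ℋ₁ ∪ ℋ₂)-measurable iff X = h(Y₁, Y₂) with
h : [0,1]² → ℝ Borel and Yᵢ ℋᵢ-measurable. -/
theorem stmt_3 {Ω : Type*} [F : MeasurableSpace Ω]
    (H1 H2 : MeasurableSpace Ω) (hH1 : H1 ≤ F) (hH2 : H2 ≤ F) (X : Ω → ℝ) :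
    Measurable[H1 ⊔ H2] X ↔
      ∃ (h : unitInterval × unitInterval → ℝ) (Y1 Y2 : Ω → unitInterval),
        Measurable h ∧ Measurable[H1] Y1 ∧ Measurable[H2] Y2 ∧
        ∀ ω, X ω = h (Y1 ω, Y2 ω) :=
  stmt_3_general H1 H2 X
end

section
/- Let $(\Omega, \mathcal{F}, P)$ be a probability space, $(\Omega_X, \mathcal{F}_X)$ a standard Borel space with $\Omega_X$ uncountable, $(\Omega_S, \mathcal{F}_S)$ a measurable space, and let $X : \Omega \to \Omega_X$, $S : \Omega \to \Omega_S$ be random elements. Suppose there exist a measurable function $f : \Omega_S \times [0,1] \to \Omega_X$ and a random variable $R$ uniform on $[0,1]$, independent of $S$, such that $X = f(S, R)$ almost surely. Then there exist a measurable function $g : \Omega_S \times [0,1] \to \Omega_X$ and a random variable $W$ uniform on $[0,1]$, independent of $S$, such that $X(\omega) = g(S(\omega), W(\omega))$ for every $\omega \in \Omega$ (surely, not merely almost surely). -/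
/-!
Embed `ΩX` Borel-isomorphically into the Cantor set, a Lebesgue-null subset of `[0,1]`, by `E`.
Then `R` almost surely avoids `range E`, so replacing `R` by `E ∘ X` on the exceptional event
`{X ≠ f (S, R)} ∪ {R ∈ range E}` changes neither its law nor its independence from `S`. The map
`g`, equal to `E⁻¹` on `range E` and to `f` elsewhere, then recovers `X` at every `ω`.
-/

open MeasureTheory ProbabilityTheory Set Function

lemma preCantorSet_succ_eq_image_homothety (n : ℕ) :
    preCantorSet (n + 1) = AffineMap.homothety (0 : ℝ) (1 / 3 : ℝ) '' preCantorSet n ∪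
      AffineMap.homothety (1 : ℝ) (1 / 3 : ℝ) '' preCantorSet n := by
  rw [preCantorSet_succ]
  congr 2 <;> ext x <;> simp [AffineMap.homothety_apply] <;> ring

lemma volume_preCantorSet_le (n : ℕ) :
    volume (preCantorSet n) ≤ ENNReal.ofReal ((2 / 3) ^ n) := by
  induction n with
  | zero => simp
  | succ n ih =>
    calc volume (preCantorSet (n + 1))
        ≤ ENNReal.ofReal (1 / 3) * volume (preCantorSet n)
          + ENNReal.ofReal (1 / 3) * volume (preCantorSet n) := by
          rw [preCantorSet_succ_eq_image_homothety]
          refine (measure_union_le _ _).trans_eq ?_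
          simp only [Measure.addHaar_image_homothety, Module.finrank_self, pow_one]
          norm_num
      _ = ENNReal.ofReal (2 / 3) * volume (preCantorSet n) := by
          rw [← add_mul, ← ENNReal.ofReal_add (by norm_num) (by norm_num)]; norm_num
      _ ≤ ENNReal.ofReal (2 / 3) * ENNReal.ofReal ((2 / 3) ^ n) := by gcongr
      _ = ENNReal.ofReal ((2 / 3) ^ (n + 1)) := by
          rw [← ENNReal.ofReal_mul (by norm_num), pow_succ, mul_comm]

theorem volume_cantorSet : volume cantorSet = 0 := by
  have h : Filter.Tendsto (fun n : ℕ ↦ ENNReal.ofReal ((2 / 3) ^ n)) Filter.atTop (nhds 0) := by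
    simpa using ENNReal.tendsto_ofReal
      (tendsto_pow_atTop_nhds_zero_of_lt_one (by norm_num : (0 : ℝ) ≤ 2 / 3) (by norm_num))
  exact nonpos_iff_eq_zero.1 (ge_of_tendsto' h fun n ↦
    (measure_mono (iInter_subset _ n)).trans (volume_preCantorSet_le n))

theorem exists_measurableEmbedding_unitInterval_volume_range_eq_zero (α : Type*)
    [MeasurableSpace α] [StandardBorelSpace α] [Uncountable α] :
    ∃ E : α → unitInterval, MeasurableEmbedding E ∧ volume (range E) = 0 := by
  let e : α ≃ᵐ (ℕ → Bool) := PolishSpace.measurableEquivNatBoolOfNotCountable not_countable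
  let c : α → cantorSet := cantorSetHomeomorphNatToBool.symm ∘ e
  let E : α → unitInterval := inclusion cantorSet_subset_unitInterval ∘ c
  have hE : Measurable E := (continuous_inclusion _).measurable.comp
    (cantorSetHomeomorphNatToBool.symm.continuous.measurable.comp e.measurable)
  have hEinj : Injective E :=
    (inclusion_injective _).comp (cantorSetHomeomorphNatToBool.symm.injective.comp e.injective)
  refine ⟨E, hE.measurableEmbedding hEinj, ?_⟩
  rw [unitInterval.volume_apply]
  refine measure_mono_null ?_ volume_cantorSet
  rintro _ ⟨_, ⟨x, rfl⟩, rfl⟩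
  exact (c x).2

lemma MeasurableEmbedding.exists_measurable_prod_extend {α β γ : Type*} [MeasurableSpace α]
    [MeasurableSpace β] [MeasurableSpace γ] {E : α → β} (hE : MeasurableEmbedding E)
    {f : γ × β → α} (hf : Measurable f) :
    ∃ g : γ × β → α, Measurable g ∧ (∀ c a, g (c, E a) = a) ∧
      ∀ c b, b ∉ range E → g (c, b) = f (c, b) := by
  have hE' : MeasurableEmbedding (fun p : γ × α ↦ (p.1, E p.2)) :=
    MeasurableEmbedding.id.prodMap hE
  refine ⟨extend (fun p : γ × α ↦ (p.1, E p.2)) Prod.snd f,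
    hE'.measurable_extend measurable_snd hf, fun c a ↦ hE'.injective.extend_apply _ _ (c, a),
    fun c b hb ↦ extend_apply' _ _ _ ?_⟩
  rintro ⟨⟨c', a⟩, h⟩
  exact hb ⟨a, congrArg Prod.snd h⟩

theorem stmt_7_general {Ω : Type*} [MeasurableSpace Ω] (P : Measure Ω)
    {ΩX : Type*} [MeasurableSpace ΩX] [StandardBorelSpace ΩX] [Uncountable ΩX]
    {ΩS : Type*} [MeasurableSpace ΩS]
    (X : Ω → ΩX) (S : Ω → ΩS) (hX : Measurable X) (hS : Measurable S)
    (hrep : ∃ (f : ΩS × unitInterval → ΩX) (R : Ω → unitInterval),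
      Measurable f ∧ Measurable R ∧
      Measure.map R P = (volume : Measure unitInterval) ∧
      IndepFun R S P ∧ ∀ᵐ ω ∂P, X ω = f (S ω, R ω)) :
    ∃ (g : ΩS × unitInterval → ΩX) (W : Ω → unitInterval),
      Measurable g ∧ Measurable W ∧
      Measure.map W P = (volume : Measure unitInterval) ∧
      IndepFun W S P ∧ ∀ ω, X ω = g (S ω, W ω) := by
  classical
  obtain ⟨f, R, hf, hR, hRlaw, hRS, hXf⟩ := hrep
  obtain ⟨E, hE, hEnull⟩ := exists_measurableEmbedding_unitInterval_volume_range_eq_zero ΩX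
  obtain ⟨g, hg, hgE, hgf⟩ := hE.exists_measurable_prod_extend hf
  let G : Set Ω := {ω | X ω = f (S ω, R ω)} \ R ⁻¹' range E
  have hG : MeasurableSet G :=
    (measurableSet_eq_fun hX (hf.comp (hS.prodMk hR))).diff (hR hE.measurableSet_range)
  let W : Ω → unitInterval := G.piecewise R (E ∘ X)
  have hRE : ∀ᵐ ω ∂P, R ω ∉ range E := by
    rw [← ae_map_iff hR.aemeasurable hE.measurableSet_range.compl, hRlaw]
    exact measure_eq_zero_iff_ae_notMem.1 hEnull
  have hWR : W =ᵐ[P] R := by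
    filter_upwards [hXf, hRE] with ω hω hω' using piecewise_eq_of_mem _ _ _ ⟨hω, hω'⟩
  refine ⟨g, W, hg, Measurable.piecewise hG hR (hE.measurable.comp hX),
    by rw [Measure.map_congr hWR, hRlaw], hRS.congr hWR.symm .rfl, fun ω ↦ ?_⟩
  by_cases hω : ω ∈ G
  · have hWω : W ω = R ω := piecewise_eq_of_mem _ _ _ hω
    rw [hWω, hgf _ _ hω.2]
    exact hω.1
  · have hWω : W ω = E (X ω) := piecewise_eq_of_notMem _ _ _ hω
    rw [hWω, hgE]

/-- upgrading Kallenberg's representation X = f(S,R) from almost surely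
to surely. -/
theorem stmt_7 {Ω : Type*} [MeasurableSpace Ω] (P : Measure Ω) [IsProbabilityMeasure P]
    {ΩX : Type*} [MeasurableSpace ΩX] [StandardBorelSpace ΩX] [Uncountable ΩX]
    {ΩS : Type*} [MeasurableSpace ΩS]
    (X : Ω → ΩX) (S : Ω → ΩS) (hX : Measurable X) (hS : Measurable S)
    (hrep : ∃ (f : ΩS × unitInterval → ΩX) (R : Ω → unitInterval),
      Measurable f ∧ Measurable R ∧
      Measure.map R P = (volume : Measure unitInterval) ∧
      IndepFun R S P ∧ ∀ᵐ ω ∂P, X ω = f (S ω, R ω)) :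
    ∃ (g : ΩS × unitInterval → ΩX) (W : Ω → unitInterval),
      Measurable g ∧ Measurable W ∧
      Measure.map W P = (volume : Measure unitInterval) ∧
      IndepFun W S P ∧ ∀ ω, X ω = g (S ω, W ω) :=
  stmt_7_general P X S hX hS hrep
end

section
/- Let $(\Omega, \mathcal{F}, P) = ([0,1]^{\mathbb{N}}, \bigotimes_{k\in\mathbb{N}} \mathcal{B}([0,1]), \bigotimes_{k\in\mathbb{N}} \mu)$ where $\mu$ is Lebesgue measure on $[0,1]$. Let $A \subseteq [0,1]$ be a set such that every Borel subset of $A$ and every Borel subset of $[0,1] \setminus A$ has Lebesgue measure zero. Fix $k \in \mathbb{N}$ and define $D_k = \{\omega \in [0,1]^{\mathbb{N}} : \omega_k \in A\}$. Then every $\mathcal{F}$-measurable subset $Z \subseteq D_k$ satisfies $P(Z) = 0$. -/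
/-!
An inner regular measure is determined on a measurable set `Z` by its compact subsets `K`.
If `Z ⊆ {ω | ω k ∈ A}`, the projection of such a `K` to coordinate `k` is a compact, hence Borel,
subset of `A`, so it is Lebesgue-null; as the `k`-th marginal of `P` is Lebesgue measure,
`P K ≤ P (π_k⁻¹ (π_k K)) = 0`.
-/

open MeasureTheory

theorem MeasureTheory.Measure.measure_eq_zero_of_subset_preimage
    {X Y : Type*} [TopologicalSpace X] [MeasurableSpace X] [OpensMeasurableSpace X]
    [TopologicalSpace Y] [MeasurableSpace Y] [BorelSpace Y] [T2Space Y]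
    (μ : Measure X) [μ.InnerRegular] {f : X → Y} (hf : Continuous f) {A : Set Y}
    (hA : ∀ B ⊆ A, MeasurableSet B → μ.map f B = 0)
    {Z : Set X} (hZ : MeasurableSet Z) (hZA : Z ⊆ f ⁻¹' A) :
    μ Z = 0 := by
  rw [hZ.measure_eq_iSup_isCompact, ENNReal.iSup_eq_zero]
  refine fun K => ENNReal.iSup_eq_zero.2 fun hKZ => ENNReal.iSup_eq_zero.2 fun hK => ?_
  have hfK : MeasurableSet (f '' K) := (hK.image hf).isClosed.measurableSet
  have hfK_null : μ.map f (f '' K) = 0 :=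
    hA _ (Set.image_subset_iff.2 (hKZ.trans hZA)) hfK
  rw [Measure.map_apply hf.measurable hfK] at hfK_null
  exact measure_mono_null (Set.subset_preimage_image f K) hfK_null

theorem MeasureTheory.Measure.map_eval_eq_of_cylinder {ι α : Type*} [MeasurableSpace α]
    (P : Measure (ι → α)) (ν : Measure α)
    (hP : ∀ (s : Finset ι) (B : ι → Set α), (∀ i, MeasurableSet (B i)) →
      P {ω | ∀ i ∈ s, ω i ∈ B i} = ∏ i ∈ s, ν (B i))
    (k : ι) :
    P.map (fun ω => ω k) = ν := by
  ext B hB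
  rw [Measure.map_apply (measurable_pi_apply k) hB]
  simpa [Set.preimage] using hP {k} (fun _ => B) (fun _ => hB)

theorem stmt_13_general (P : Measure (ℕ → unitInterval)) [IsProbabilityMeasure P]
    (hP : ∀ (s : Finset ℕ) (B : ℕ → Set unitInterval), (∀ i, MeasurableSet (B i)) →
      P {ω | ∀ i ∈ s, ω i ∈ B i} = ∏ i ∈ s, (volume : Measure unitInterval) (B i))
    (A : Set unitInterval)
    (hA : ∀ B ⊆ A, MeasurableSet B → (volume : Measure unitInterval) B = 0)
    (k : ℕ) (Z : Set (ℕ → unitInterval)) (hZ : MeasurableSet Z)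
    (hZD : Z ⊆ {ω | ω k ∈ A}) :
    P Z = 0 := by
  refine P.measure_eq_zero_of_subset_preimage (continuous_apply k) ?_ hZ hZD
  rwa [P.map_eval_eq_of_cylinder volume hP k]

/-- on the countable product of Lebesgue measure on [0,1], every
measurable subset of D_k = {ω : ω k ∈ A} is null, when A has all its Borel subsets
and all Borel subsets of its complement of measure zero. -/
theorem stmt_13 (P : Measure (ℕ → unitInterval)) [IsProbabilityMeasure P]
    (hP : ∀ (s : Finset ℕ) (B : ℕ → Set unitInterval), (∀ i, MeasurableSet (B i)) →
      P {ω | ∀ i ∈ s, ω i ∈ B i} = ∏ i ∈ s, (volume : Measure unitInterval) (B i))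
    (A : Set unitInterval)
    (hA : ∀ B ⊆ A, MeasurableSet B → (volume : Measure unitInterval) B = 0)
    (hAc : ∀ B ⊆ Aᶜ, MeasurableSet B → (volume : Measure unitInterval) B = 0)
    (k : ℕ) (Z : Set (ℕ → unitInterval)) (hZ : MeasurableSet Z)
    (hZD : Z ⊆ {ω | ω k ∈ A}) :
    P Z = 0 :=
  stmt_13_general P hP A hA k Z hZ hZD
end

section
/- Suppose there exists a set $A \subseteq [0,1]$ with inner Lebesgue measure $0$ and outer Lebesgue measure $1$. On the product probability space $([0,1]^{\mathbb{N}}, \bigotimes \mathcal{B}([0,1]), \bigotimes \mu)$ with coordinate projections $S_k(\omega) = \omega_k$, define $C(s) = \{0,1\}$ if $s \in A$ and $C(s) = \{0,2\}$ if $s \notin A$. Then for any sequence of (measurable) random variables $(X_k)_{k=1}^{\infty}$ with $X_k(\omega) \in C(S_k(\omega))$ for all $\omega$ and all $k$, we have $X_k = 0$ almost surely for every $k$, and hence $\lim_{k\to\infty} \frac{1}{k}\sum_{i=1}^{k} X_i = 0$ almost surely; whereas the (nonmeasurable) selection $X_k = 1$ if $S_k \in A$ and $X_k = 2$ otherwise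 satisfies $X_k \ge 1$ everywhere, giving $\liminf_{k\to\infty}\frac{1}{k}\sum_{i=1}^{k}X_i \ge 1$ surely. -/
/-!
Resampling one coordinate of the product measure leaves it unchanged, so by Fubini the
probability of a measurable event on which `ω k ∈ A` is the integral over `x` of a measurable
function supported in `A`; its support is a measurable subset of `A`, hence null. Applied to
`A` and to `Aᶜ`, this makes `{X k = 1}` and `{X k = 2}` null, so `X k = 0` almost surely.
The nonmeasurable selection takes values in `[1, 2]`, so its averages stay above `1`.
-/

open MeasureTheory Filter Finset
open scoped Classical

namespace MeasureTheory

variable {α : Type*} [MeasurableSpace α]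

/-- `A` has inner measure zero. -/
def InnerNull (μ : Measure α) (A : Set α) : Prop :=
  ∀ B ⊆ A, MeasurableSet B → μ B = 0

lemma Measure.prod_eq_zero_of_fst_mem {β : Type*} [MeasurableSpace β]
    {μ : Measure α} [SFinite μ] {ν : Measure β} [SFinite ν] {A : Set α} (hA : InnerNull μ A)
    {E : Set (α × β)} (hE : MeasurableSet E) (hEA : ∀ p ∈ E, p.1 ∈ A) :
    μ.prod ν E = 0 := by
  have hf : Measurable fun x => ν (Prod.mk x ⁻¹' E) := measurable_measure_prodMk_left hE
  have hsupp : {x | ν (Prod.mk x ⁻¹' E) ≠ 0} ⊆ A := by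
    intro x hx
    obtain ⟨y, hy⟩ := nonempty_of_measure_ne_zero hx
    exact hEA (x, y) hy
  rw [Measure.prod_apply hE, lintegral_eq_zero_iff hf, EventuallyEq, ae_iff]
  exact hA _ hsupp (hf (measurableSet_singleton 0).compl)

variable {ι : Type*}

def IsProductOf (P : Measure (ι → α)) (μ : Measure α) : Prop :=
  ∀ (s : Finset ι) (B : ι → Set α), (∀ i, MeasurableSet (B i)) →
    P {ω | ∀ i ∈ s, ω i ∈ B i} = ∏ i ∈ s, μ (B i)

lemma IsProductOf.map_update_prod [DecidableEq ι] {P : Measure (ι → α)} [IsProbabilityMeasure P]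
    {μ : Measure α} [IsProbabilityMeasure μ] (hP : IsProductOf P μ) (k : ι) :
    (μ.prod P).map (fun p => Function.update p.2 k p.1) = P := by
  have hg : Measurable fun p : α × (ι → α) => Function.update p.2 k p.1 :=
    (measurable_update' (a := k)).comp measurable_swap
  have : IsProbabilityMeasure ((μ.prod P).map fun p => Function.update p.2 k p.1) :=
    Measure.isProbabilityMeasure_map hg.aemeasurable
  refine ext_of_generate_finite _ generateFrom_squareCylinders.symm
    (isPiSystem_squareCylinders (fun _ => MeasurableSpace.isPiSystem_measurableSet)
      (fun _ => MeasurableSet.univ)) ?_ (by simp)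
  rintro _ ⟨s, t, ht, rfl⟩
  simp only [Set.mem_univ_pi, Set.mem_ofPred_eq] at ht
  have hcyl : ∀ s : Finset ι, (s : Set ι).pi t = {ω | ∀ i ∈ s, ω i ∈ t i} := fun s => by
    ext ω; simp [Set.mem_pi]
  have hpre : (fun p : α × (ι → α) => Function.update p.2 k p.1) ⁻¹' (s : Set ι).pi t =
      (if k ∈ s then t k else Set.univ) ×ˢ (s.erase k : Set ι).pi t := by
    ext ⟨x, ω⟩
    by_cases hk : k ∈ s
    · simp only [Set.mem_preimage, Set.mem_prod, if_pos hk, Set.mem_pi, Finset.mem_coe,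
        Finset.mem_erase]
      constructor
      · intro h
        exact ⟨by simpa using h k hk, fun i hi => by simpa [hi.1] using h i hi.2⟩
      · rintro ⟨hx, hω⟩ i hi
        rcases eq_or_ne i k with rfl | hik
        · simpa using hx
        · simpa [hik] using hω i ⟨hik, hi⟩
    · have : ∀ i ∈ s, i ≠ k := fun i hi h => hk (h ▸ hi)
      simp +contextual [Set.mem_pi, if_neg hk, Finset.erase_eq_of_notMem hk, this]
  rw [Measure.map_apply hg (.pi s.countable_toSet fun i _ => ht i), hpre, Measure.prod_prod,
    hcyl, hcyl, hP _ t ht, hP _ t ht]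
  split_ifs with hk
  · exact Finset.mul_prod_erase s (fun i => μ (t i)) hk
  · rw [measure_univ, one_mul, Finset.erase_eq_of_notMem hk]

lemma IsProductOf.measure_eq_zero_of_apply_mem {P : Measure (ι → α)} [IsProbabilityMeasure P]
    {μ : Measure α} [IsProbabilityMeasure μ] (hP : IsProductOf P μ) {A : Set α}
    (hA : InnerNull μ A) (k : ι) {E : Set (ι → α)} (hE : MeasurableSet E)
    (hEA : ∀ ω ∈ E, ω k ∈ A) : P E = 0 := by
  have hg : Measurable fun p : α × (ι → α) => Function.update p.2 k p.1 :=
    (measurable_update' (a := k)).comp measurable_swap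
  rw [← hP.map_update_prod k, Measure.map_apply hg hE]
  exact Measure.prod_eq_zero_of_fst_mem hA (hg hE) fun p hp => by simpa using hEA _ hp

end MeasureTheory

lemma le_liminf_avg_of_le {x : ℕ → ℝ} {a b : ℝ} (ha : ∀ i, a ≤ x i) (hb : ∀ i, x i ≤ b) :
    a ≤ liminf (fun k : ℕ => (k : ℝ)⁻¹ * ∑ i ∈ range k, x i) atTop := by
  have avg_mem : ∀ k : ℕ, 1 ≤ k → a ≤ (k : ℝ)⁻¹ * ∑ i ∈ range k, x i ∧
      (k : ℝ)⁻¹ * ∑ i ∈ range k, x i ≤ b := by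
    intro k hk
    have hk : (0 : ℝ) < k := by exact_mod_cast hk
    have hlo := card_nsmul_le_sum (range k) x a fun i _ => ha i
    have hhi := sum_le_card_nsmul (range k) x b fun i _ => hb i
    simp only [card_range, nsmul_eq_mul] at hlo hhi
    rw [le_inv_mul_iff₀ hk, inv_mul_le_iff₀ hk]
    exact ⟨by linarith, by linarith⟩
  have hev := eventually_atTop.2 ⟨1, avg_mem⟩
  exact le_liminf_of_le
    (isBoundedUnder_of_eventually_le (hev.mono fun _ h => h.2)).isCoboundedUnder_ge
    (hev.mono fun _ h => h.1)

/-- with a Sierpiński set A (inner measure 0, outer measure 1), every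
measurable policy satisfying X_k ∈ C(S_k) has X_k = 0 a.s. (so the averages tend to 0
a.s.), while the nonmeasurable selection gives liminf of the averages ≥ 1 surely. -/
theorem stmt_14 (A : Set unitInterval)
    (hA : ∀ B ⊆ A, MeasurableSet B → (volume : Measure unitInterval) B = 0)
    (hAc : ∀ B ⊆ Aᶜ, MeasurableSet B → (volume : Measure unitInterval) B = 0)
    (P : Measure (ℕ → unitInterval)) [IsProbabilityMeasure P]
    (hP : ∀ (s : Finset ℕ) (B : ℕ → Set unitInterval), (∀ i, MeasurableSet (B i)) →
      P {ω | ∀ i ∈ s, ω i ∈ B i} = ∏ i ∈ s, (volume : Measure unitInterval) (B i))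
    (C : unitInterval → Set ℝ)
    (hCA : ∀ s ∈ A, C s = {0, 1}) (hCAc : ∀ s ∉ A, C s = {0, 2})
    (X : ℕ → (ℕ → unitInterval) → ℝ) (hXmeas : ∀ k, Measurable (X k))
    (hXC : ∀ k ω, X k ω ∈ C (ω k)) :
    (∀ k, ∀ᵐ ω ∂P, X k ω = 0) ∧
    (∀ᵐ ω ∂P, Filter.Tendsto
      (fun k : ℕ => (k : ℝ)⁻¹ * ∑ i ∈ Finset.range k, X i ω) Filter.atTop (nhds 0)) ∧
    (∀ X' : ℕ → (ℕ → unitInterval) → ℝ,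
      (∀ k ω, X' k ω = if ω k ∈ A then 1 else 2) →
      (∀ k ω, X' k ω ∈ C (ω k)) ∧
      ∀ ω, 1 ≤ Filter.liminf
        (fun k : ℕ => (k : ℝ)⁻¹ * ∑ i ∈ Finset.range k, X' i ω) Filter.atTop) := by
  have hC : ∀ s, C s = if s ∈ A then {0, 1} else {0, 2} := fun s => by
    split_ifs with h
    exacts [hCA s h, hCAc s h]
  have hP : IsProductOf P volume := hP
  have mem_A_of_eq_one : ∀ k ω, X k ω = 1 → ω k ∈ A := fun k ω h1 => by
    by_contra h
    have := hXC k ω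
    norm_num [h1, hC, h] at this
  have mem_Ac_of_eq_two : ∀ k ω, X k ω = 2 → ω k ∈ Aᶜ := fun k ω h2 h => by
    have := hXC k ω
    norm_num [h2, hC, h] at this
  have hzero : ∀ k, ∀ᵐ ω ∂P, X k ω = 0 := fun k => by
    have h1 : P (X k ⁻¹' {1}) = 0 := hP.measure_eq_zero_of_apply_mem hA k
      (hXmeas k (measurableSet_singleton 1)) (mem_A_of_eq_one k)
    have h2 : P (X k ⁻¹' {2}) = 0 := hP.measure_eq_zero_of_apply_mem hAc k
      (hXmeas k (measurableSet_singleton 2)) (mem_Ac_of_eq_two k)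
    refine ae_iff.2 (measure_mono_null (fun ω hω => ?_) (measure_union_null h1 h2))
    have := hXC k ω
    rw [hC] at this
    split_ifs at this <;> simp_all
  refine ⟨hzero, ?_, fun X' hX' => ⟨fun k ω => ?_, fun ω => ?_⟩⟩
  · filter_upwards [ae_all_iff.2 hzero] with ω hω
    simp [hω]
  · by_cases h : ω k ∈ A <;> simp [hX', hC, h]
  · exact le_liminf_avg_of_le (b := 2) (fun i => by rw [hX']; split_ifs <;> norm_num)
      fun i => by rw [hX']; split_ifs <;> norm_num
end

section
/- Let $(M_k)_{k=1}^{\infty}$ be a bounded martingale difference sequence of random vectors in $\mathbb{R}^m$ (i.e., $\|M_k\| \le c$ surely for some constant $c$, and $\mathbb{E}[M_k \mid M_1, \ldots, M_{k-1}] = 0$ almost surely for all $k$). Let $(Z_k)_{k=1}^{\infty}$ be random vectors taking values almost surely in a compact convex set $\overline{\Gamma} \subseteq \mathbb{R}^m$, and suppose $X_k = M_k + Z_k$. Then $\lim_{k\to\infty} \mathrm{dist}\left(\frac{1}{k}\sum_{i=1}^k X_i, \overline{\Gamma}\right) = 0$ almost surely, where $\mathrm{dist}(x, \overline{\Gamma})$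 is the Euclidean distance from $x$ to $\overline{\Gamma}$. -/
/-!
Coordinatewise, the weighted sums `∑_{k<n} M_k / (k + 1)` form a martingale with orthogonal
increments whose second moments are bounded by `c² ∑ 1/(k+1)²`; being L²-bounded it is
L¹-bounded and converges almost surely, and Kronecker's lemma turns this into
`(1/n) ∑_{k<n} M_k → 0` almost surely. By convexity `(1/n) ∑_{k<n} Z_k ∈ G`, so the distance
from the average of the `X_k` to `G` is at most the norm of the average of the `M_k`.
-/
open MeasureTheory Filter Finset Topology

theorem Filter.Tendsto.kronecker_smul {E : Type*} [NormedAddCommGroup E] [NormedSpace ℝ E]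
    {u : ℕ → E} {L : E}
    (h : Tendsto (fun n : ℕ => ∑ k ∈ range n, ((k : ℝ) + 1)⁻¹ • u k) atTop (𝓝 L)) :
    Tendsto (fun n : ℕ => (n : ℝ)⁻¹ • ∑ k ∈ range n, u k) atTop (𝓝 0) := by
  set s : ℕ → E := fun n => ∑ k ∈ range n, ((k : ℝ) + 1)⁻¹ • u k
  have summation_by_parts : ∀ n : ℕ, ∑ k ∈ range n, u k = (n : ℝ) • s n - ∑ k ∈ range n, s k := by
    intro n
    induction n with
    | zero => simp
    | succ n ih =>
      have hn : ((n : ℝ) + 1) ≠ 0 := by positivity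
      simp only [s, sum_range_succ] at ih ⊢
      rw [ih]
      push_cast
      rw [smul_add, smul_smul, mul_inv_cancel₀ hn, add_smul, one_smul, one_smul]
      abel
  have hlim : Tendsto (fun n : ℕ => s n - (n : ℝ)⁻¹ • ∑ k ∈ range n, s k) atTop (𝓝 0) := by
    simpa using h.sub h.cesaro_smul
  refine hlim.congr' ?_
  filter_upwards [eventually_ne_atTop 0] with n hn
  rw [summation_by_parts, smul_sub, smul_smul, inv_mul_cancel₀ (Nat.cast_ne_zero.2 hn), one_smul]

theorem integral_mul_eq_zero_of_condExp_eq_zero {Ω : Type*} {m m0 : MeasurableSpace Ω}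
    {μ : Measure Ω} [IsFiniteMeasure μ] {f g : Ω → ℝ} (hm : m ≤ m0)
    (hf : StronglyMeasurable[m] f) (hfg : Integrable (f * g) μ) (hg : Integrable g μ)
    (hcond : μ[g | m] =ᵐ[μ] 0) : ∫ ω, f ω * g ω ∂μ = 0 := by
  have hpull : μ[f * g | m] =ᵐ[μ] 0 := by
    filter_upwards [condExp_mul_of_stronglyMeasurable_left hf hfg hg, hcond] with ω h1 h2
    simp [h1, h2]
  calc ∫ ω, f ω * g ω ∂μ = ∫ ω, (μ[f * g | m]) ω ∂μ := (integral_condExp hm).symm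
    _ = 0 := by simp [integral_congr_ae hpull]

section MartingaleDifference

variable {Ω : Type*} {m0 : MeasurableSpace Ω} {μ : Measure Ω} {ℱ : Filtration ℕ m0}

theorem stronglyAdapted_sum_range {E : Type*} [AddCommMonoid E] [TopologicalSpace E]
    [ContinuousAdd E] {g : ℕ → Ω → E} (hg : ∀ k, StronglyMeasurable[ℱ (k + 1)] (g k)) :
    StronglyAdapted ℱ (fun n => ∑ k ∈ range n, g k) := fun _ =>
  Finset.stronglyMeasurable_sum _ fun k hk => (hg k).mono (ℱ.mono (mem_range.1 hk))

theorem martingale_sum_range [IsFiniteMeasure μ] {E : Type*} [NormedAddCommGroup E]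
    [NormedSpace ℝ E] [CompleteSpace E] {g : ℕ → Ω → E}
    (hg : ∀ k, StronglyMeasurable[ℱ (k + 1)] (g k)) (hint : ∀ k, Integrable (g k) μ)
    (hcond : ∀ k, μ[g k | ℱ k] =ᵐ[μ] 0) :
    Martingale (fun n => ∑ k ∈ range n, g k) ℱ μ := by
  have hsum_int : ∀ n, Integrable (∑ k ∈ range n, g k) μ := fun n =>
    integrable_finsetSum' _ fun k _ => hint k
  refine martingale_nat (stronglyAdapted_sum_range hg) hsum_int fun n => ?_
  have hpast : μ[∑ k ∈ range n, g k | ℱ n] = ∑ k ∈ range n, g k :=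
    condExp_of_stronglyMeasurable (ℱ.le n) (stronglyAdapted_sum_range hg n) (hsum_int n)
  filter_upwards [condExp_add (hsum_int n) (hint n) (ℱ n), hcond n] with ω h1 h2
  simp [sum_range_succ, h1, h2, hpast]

theorem MeasureTheory.Martingale.exists_ae_tendsto_of_integral_sq_le [IsFiniteMeasure μ]
    {f : ℕ → Ω → ℝ} {R : ℝ} (hf : Martingale f ℱ μ) (hsq : ∀ n, Integrable (fun ω => f n ω ^ 2) μ)
    (hR : ∀ n, ∫ ω, f n ω ^ 2 ∂μ ≤ R) :
    ∀ᵐ ω ∂μ, ∃ l, Tendsto (fun n => f n ω) atTop (𝓝 l) := by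
  refine hf.submartingale.exists_ae_tendsto_of_bdd (R := ((R + μ.real Set.univ) / 2).toNNReal)
    fun n => ?_
  rw [eLpNorm_one_eq_lintegral_enorm, ← ofReal_integral_norm_eq_lintegral_enorm (hf.integrable n)]
  refine ENNReal.ofReal_le_ofReal ?_
  -- `|x| ≤ (x ^ 2 + 1) / 2` turns the bound on second moments into one on first moments.
  calc ∫ ω, ‖f n ω‖ ∂μ ≤ ∫ ω, (f n ω ^ 2 + 1) / 2 ∂μ :=
        integral_mono (hf.integrable n).norm (((hsq n).add (integrable_const 1)).div_const 2)
          fun ω => by nlinarith [sq_nonneg (|f n ω| - 1), sq_abs (f n ω), Real.norm_eq_abs (f n ω)]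
    _ = (∫ ω, f n ω ^ 2 ∂μ + μ.real Set.univ) / 2 := by
        rw [integral_div, integral_add (hsq n) (integrable_const 1)]
        simp
    _ ≤ (R + μ.real Set.univ) / 2 := by linarith [hR n]

theorem integral_sq_sum_range [IsFiniteMeasure μ] {g : ℕ → Ω → ℝ} {b : ℕ → ℝ}
    (hg : ∀ k, StronglyMeasurable[ℱ (k + 1)] (g k)) (hbdd : ∀ k ω, |g k ω| ≤ b k)
    (hcond : ∀ k, μ[g k | ℱ k] =ᵐ[μ] 0) (n : ℕ) :
    ∫ ω, (∑ k ∈ range n, g k ω) ^ 2 ∂μ = ∑ k ∈ range n, ∫ ω, g k ω ^ 2 ∂μ := by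
  induction n with
  | zero => simp
  | succ n ih =>
    set S : Ω → ℝ := fun ω => ∑ k ∈ range n, g k ω
    have hS : StronglyMeasurable[ℱ n] S := by
      simpa only [S, ← Finset.sum_apply] using stronglyAdapted_sum_range hg n
    have hS_bdd : ∀ ω, ‖S ω‖ ≤ ∑ k ∈ range n, b k := fun ω =>
      (abs_sum_le_sum_abs _ _).trans (sum_le_sum fun k _ => hbdd k ω)
    have hg_meas : AEStronglyMeasurable (g n) μ := ((hg n).mono (ℱ.le _)).aestronglyMeasurable
    have hS_meas : AEStronglyMeasurable S μ := (hS.mono (ℱ.le _)).aestronglyMeasurable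
    have hg_int : Integrable (g n) μ := .of_bound hg_meas (b n) (ae_of_all _ (hbdd n))
    have hSg_int : Integrable (fun ω => S ω * g n ω) μ :=
      hg_int.bdd_mul hS_meas (ae_of_all _ hS_bdd)
    have hSS_int : Integrable (fun ω => S ω ^ 2) μ := by
      simpa only [sq] using (Integrable.of_bound hS_meas _ (ae_of_all _ hS_bdd)).bdd_mul hS_meas
        (ae_of_all _ hS_bdd)
    have hgg_int : Integrable (fun ω => g n ω ^ 2) μ := by
      simpa only [sq] using hg_int.bdd_mul hg_meas (ae_of_all _ (hbdd n))
    have hcross : ∫ ω, S ω * g n ω ∂μ = 0 :=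
      integral_mul_eq_zero_of_condExp_eq_zero (ℱ.le n) hS hSg_int hg_int (hcond n)
    calc ∫ ω, (∑ k ∈ range (n + 1), g k ω) ^ 2 ∂μ
        = ∫ ω, S ω ^ 2 + 2 * (S ω * g n ω) + g n ω ^ 2 ∂μ := by
          congr 1; ext ω; simp only [S, sum_range_succ]; ring
      _ = ∫ ω, S ω ^ 2 ∂μ + 2 * ∫ ω, S ω * g n ω ∂μ + ∫ ω, g n ω ^ 2 ∂μ := by
          rw [integral_add (f := fun ω => S ω ^ 2 + 2 * (S ω * g n ω))
              (hSS_int.add (hSg_int.const_mul 2)) hgg_int,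
            integral_add hSS_int (hSg_int.const_mul 2), integral_const_mul]
      _ = ∑ k ∈ range (n + 1), ∫ ω, g k ω ^ 2 ∂μ := by
          rw [hcross, ih, sum_range_succ]; ring

theorem integral_sq_sum_range_le [IsFiniteMeasure μ] {g : ℕ → Ω → ℝ} {b : ℕ → ℝ}
    (hg : ∀ k, StronglyMeasurable[ℱ (k + 1)] (g k)) (hbdd : ∀ k ω, |g k ω| ≤ b k)
    (hcond : ∀ k, μ[g k | ℱ k] =ᵐ[μ] 0) (hb : Summable fun k => b k ^ 2) (n : ℕ) :
    ∫ ω, (∑ k ∈ range n, g k ω) ^ 2 ∂μ ≤ μ.real Set.univ * ∑' k, b k ^ 2 := by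
  rw [integral_sq_sum_range hg hbdd hcond]
  calc ∑ k ∈ range n, ∫ ω, g k ω ^ 2 ∂μ ≤ ∑ k ∈ range n, μ.real Set.univ * b k ^ 2 := by
        refine sum_le_sum fun k _ => ?_
        rw [mul_comm]
        refine (Real.le_norm_self _).trans
          (norm_integral_le_of_norm_le_const (ae_of_all _ fun ω => ?_))
        simpa using pow_le_pow_left₀ (abs_nonneg _) (hbdd k ω) 2
    _ ≤ μ.real Set.univ * ∑' k, b k ^ 2 := by
        rw [← mul_sum]
        gcongr
        exact hb.sum_le_tsum _ fun k _ => sq_nonneg _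

theorem ae_exists_tendsto_sum_range_of_summable_sq [IsFiniteMeasure μ] {g : ℕ → Ω → ℝ}
    {b : ℕ → ℝ} (hg : ∀ k, StronglyMeasurable[ℱ (k + 1)] (g k)) (hbdd : ∀ k ω, |g k ω| ≤ b k)
    (hcond : ∀ k, μ[g k | ℱ k] =ᵐ[μ] 0) (hb : Summable fun k => b k ^ 2) :
    ∀ᵐ ω ∂μ, ∃ l, Tendsto (fun n => ∑ k ∈ range n, g k ω) atTop (𝓝 l) := by
  have hint : ∀ k, Integrable (g k) μ := fun k =>
    .of_bound ((hg k).mono (ℱ.le _)).aestronglyMeasurable _ (ae_of_all _ (hbdd k))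
  set S : ℕ → Ω → ℝ := fun n => ∑ k ∈ range n, g k
  have hS_apply : ∀ n ω, S n ω = ∑ k ∈ range n, g k ω := fun n ω => Finset.sum_apply _ _ _
  have hmart : Martingale S ℱ μ := martingale_sum_range hg hint hcond
  have hS_sq_int : ∀ n, Integrable (fun ω => S n ω ^ 2) μ := fun n => by
    simpa only [sq] using (hmart.integrable n).bdd_mul
      (((stronglyAdapted_sum_range hg) n).mono (ℱ.le n)).aestronglyMeasurable
      (ae_of_all _ fun ω => (hS_apply n ω ▸ abs_sum_le_sum_abs _ _).trans
        (sum_le_sum fun k _ => hbdd k ω))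
  have hS_sq_le : ∀ n, ∫ ω, S n ω ^ 2 ∂μ ≤ μ.real Set.univ * ∑' k, b k ^ 2 := fun n => by
    simpa only [hS_apply] using integral_sq_sum_range_le hg hbdd hcond hb n
  simpa only [hS_apply] using hmart.exists_ae_tendsto_of_integral_sq_le hS_sq_int hS_sq_le

theorem ae_tendsto_inv_mul_sum_range_of_condExp_eq_zero [IsFiniteMeasure μ] {g : ℕ → Ω → ℝ}
    {C : ℝ} (hg : ∀ k, StronglyMeasurable[ℱ (k + 1)] (g k)) (hbdd : ∀ k ω, |g k ω| ≤ C)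
    (hcond : ∀ k, μ[g k | ℱ k] =ᵐ[μ] 0) :
    ∀ᵐ ω ∂μ, Tendsto (fun n : ℕ => (n : ℝ)⁻¹ * ∑ k ∈ range n, g k ω) atTop (𝓝 0) := by
  set h : ℕ → Ω → ℝ := fun k => ((k : ℝ) + 1)⁻¹ • g k
  have hh : ∀ k, StronglyMeasurable[ℱ (k + 1)] (h k) := fun k => (hg k).const_smul _
  have hh_bdd : ∀ k ω, |h k ω| ≤ C / ((k : ℝ) + 1) := fun k ω => by
    rw [div_eq_inv_mul]
    simpa [h, abs_mul, abs_of_pos (by positivity : (0 : ℝ) < (k : ℝ) + 1)] using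
      mul_le_mul_of_nonneg_left (hbdd k ω) (by positivity : (0 : ℝ) ≤ ((k : ℝ) + 1)⁻¹)
  have hh_cond : ∀ k, μ[h k | ℱ k] =ᵐ[μ] 0 := fun k => by
    filter_upwards [condExp_smul (((k : ℝ) + 1)⁻¹) (g k) (ℱ k), hcond k] with ω h1 h2
    simp [h, h1, h2]
  have hsumm : Summable fun k : ℕ => (C / ((k : ℝ) + 1)) ^ 2 := by
    have := ((summable_nat_add_iff 1).2 (Real.summable_nat_pow_inv.2 one_lt_two)).mul_left (C ^ 2)
    simpa [div_eq_mul_inv, mul_pow, inv_pow] using this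
  filter_upwards [ae_exists_tendsto_sum_range_of_summable_sq hh hh_bdd hh_cond hsumm]
    with ω ⟨l, hl⟩
  simpa using hl.kronecker_smul (u := fun k => g k ω)

end MartingaleDifference

theorem ae_tendsto_inv_smul_sum_range_of_condExp_eq_zero {Ω ι : Type*} {m0 : MeasurableSpace Ω}
    {μ : Measure Ω} [IsFiniteMeasure μ] {ℱ : Filtration ℕ m0} [Fintype ι]
    {M : ℕ → Ω → EuclideanSpace ℝ ι} {C : ℝ} (hM : ∀ k, StronglyMeasurable[ℱ (k + 1)] (M k))
    (hbdd : ∀ k ω, ‖M k ω‖ ≤ C) (hcond : ∀ k, μ[M k | ℱ k] =ᵐ[μ] 0) :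
    ∀ᵐ ω ∂μ, Tendsto (fun n : ℕ => (n : ℝ)⁻¹ • ∑ k ∈ range n, M k ω) atTop (𝓝 0) := by
  have hcoord : ∀ i, ∀ᵐ ω ∂μ,
      Tendsto (fun n : ℕ => (n : ℝ)⁻¹ * ∑ k ∈ range n, M k ω i) atTop (𝓝 0) := by
    intro i
    refine ae_tendsto_inv_mul_sum_range_of_condExp_eq_zero (ℱ := ℱ) (C := C)
      (fun k => (EuclideanSpace.proj i).continuous.comp_stronglyMeasurable (hM k))
      (fun k ω => (PiLp.norm_apply_le (M k ω) i).trans (hbdd k ω)) fun k => ?_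
    have hint : Integrable (M k) μ :=
      .of_bound ((hM k).mono (ℱ.le _)).aestronglyMeasurable _ (ae_of_all _ (hbdd k))
    filter_upwards [(EuclideanSpace.proj i).comp_condExp_comm hint (m := ℱ k), hcond k]
      with ω h1 h2
    refine h1.symm.trans ?_
    simp [h2]
  filter_upwards [ae_all_iff.2 hcoord] with ω hω
  rw [(PiLp.homeomorph 2 _).isInducing.tendsto_nhds_iff, tendsto_pi_nhds]
  refine fun i => (hω i).congr fun n => ?_
  simp [PiLp.homeomorph]

def MeasureTheory.Filtration.naturalStrict {Ω β : Type*} {m0 : MeasurableSpace Ω}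
    [MeasurableSpace β] (f : ℕ → Ω → β) (hf : ∀ k, Measurable (f k)) : Filtration ℕ m0 where
  seq n := ⨆ i ∈ range n, MeasurableSpace.comap (f i) inferInstance
  mono' _ _ hnp := biSup_mono fun _ hi => mem_range.2 ((mem_range.1 hi).trans_le hnp)
  le' _ := iSup₂_le fun i _ => (hf i).comap_le

theorem MeasureTheory.Filtration.measurable_naturalStrict_succ {Ω β : Type*}
    {m0 : MeasurableSpace Ω} [MeasurableSpace β] (f : ℕ → Ω → β) (hf : ∀ k, Measurable (f k))
    (k : ℕ) : Measurable[naturalStrict f hf (k + 1)] (f k) :=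
  measurable_iff_comap_le.2 <| le_iSup₂ (f := fun i (_ : i ∈ range (k + 1)) =>
    MeasurableSpace.comap (f i) inferInstance) k (mem_range.2 k.lt_succ_self)

theorem Convex.inv_card_smul_sum_mem {𝕜 E ι : Type*} [Field 𝕜] [LinearOrder 𝕜]
    [IsStrictOrderedRing 𝕜] [AddCommGroup E] [Module 𝕜 E] {G : Set E} (hG : Convex 𝕜 G)
    {s : Finset ι} (hs : s.Nonempty) {z : ι → E} (hz : ∀ i ∈ s, z i ∈ G) :
    (#s : 𝕜)⁻¹ • ∑ i ∈ s, z i ∈ G := by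
  rw [smul_sum]
  refine hG.sum_mem (fun _ _ => by positivity) ?_ hz
  rw [sum_const, nsmul_eq_mul, mul_inv_cancel₀ (Nat.cast_ne_zero.2 hs.card_pos.ne')]

theorem stmt_16_general {Ω : Type*} [MeasurableSpace Ω] (P : Measure Ω) [IsProbabilityMeasure P]
    {m : ℕ} (M Z X : ℕ → Ω → EuclideanSpace ℝ (Fin m))
    (hMmeas : ∀ k, Measurable (M k))
    (c : ℝ) (hMbdd : ∀ k ω, ‖M k ω‖ ≤ c)
    (hMD : ∀ k,
      P[M k | ⨆ i ∈ Finset.range k, MeasurableSpace.comap (M i) inferInstance] =ᵐ[P] 0)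
    (G : Set (EuclideanSpace ℝ (Fin m))) (hGconv : Convex ℝ G)
    (hZG : ∀ k, ∀ᵐ ω ∂P, Z k ω ∈ G)
    (hX : ∀ k ω, X k ω = M k ω + Z k ω) :
    ∀ᵐ ω ∂P, Tendsto
      (fun k : ℕ => Metric.infDist ((k : ℝ)⁻¹ • ∑ i ∈ Finset.range k, X i ω) G)
      atTop (nhds 0) := by
  have hMavg := ae_tendsto_inv_smul_sum_range_of_condExp_eq_zero
    (ℱ := Filtration.naturalStrict M hMmeas)
    (fun k => (Filtration.measurable_naturalStrict_succ M hMmeas k).stronglyMeasurable) hMbdd hMD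
  filter_upwards [hMavg, ae_all_iff.2 hZG] with ω hMω hZω
  refine squeeze_zero' (.of_forall fun _ => Metric.infDist_nonneg) ?_ (by simpa using hMω.norm)
  filter_upwards [eventually_ne_atTop 0] with n hn
  have hZavg : (n : ℝ)⁻¹ • ∑ i ∈ range n, Z i ω ∈ G := by
    simpa using hGconv.inv_card_smul_sum_mem (nonempty_range_iff.2 hn) fun i _ => hZω i
  calc Metric.infDist ((n : ℝ)⁻¹ • ∑ i ∈ range n, X i ω) G
      ≤ dist ((n : ℝ)⁻¹ • ∑ i ∈ range n, X i ω) ((n : ℝ)⁻¹ • ∑ i ∈ range n, Z i ω) :=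
        Metric.infDist_le_dist_of_mem hZavg
    _ = ‖(n : ℝ)⁻¹ • ∑ i ∈ range n, M i ω‖ := by
        simp [hX, sum_add_distrib, smul_add, dist_eq_norm]

/-- if X_k = M_k + Z_k with (M_k) a bounded martingale difference
sequence and Z_k valued a.s. in a compact convex set G, then the distance of the
running averages of X to G tends to 0 almost surely. -/
theorem stmt_16 {Ω : Type*} [MeasurableSpace Ω] (P : Measure Ω) [IsProbabilityMeasure P]
    {m : ℕ} (M Z X : ℕ → Ω → EuclideanSpace ℝ (Fin m))
    (hMmeas : ∀ k, Measurable (M k))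
    (c : ℝ) (hMbdd : ∀ k ω, ‖M k ω‖ ≤ c)
    (hMD : ∀ k,
      P[M k | ⨆ i ∈ Finset.range k, MeasurableSpace.comap (M i) inferInstance] =ᵐ[P] 0)
    (G : Set (EuclideanSpace ℝ (Fin m))) (hGcomp : IsCompact G) (hGconv : Convex ℝ G)
    (hZG : ∀ k, ∀ᵐ ω ∂P, Z k ω ∈ G)
    (hX : ∀ k ω, X k ω = M k ω + Z k ω) :
    ∀ᵐ ω ∂P, Tendsto
      (fun k : ℕ => Metric.infDist ((k : ℝ)⁻¹ • ∑ i ∈ Finset.range k, X i ω) G)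
      atTop (nhds 0) :=
  stmt_16_general P M Z X hMmeas c hMbdd hMD G hGconv hZG hX
end
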